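/- arXiv:1905.13174 — 2 statements merged into one kernel-verified Lean document; each statement's English description precedes it below -/
import Mathlib

section
/- Let $R \subseteq [0,\infty) \times E$ be a Root barrier with time sections $R_t := \{x \in E : (t,x) \in R\}$. Define $R^- := \bigcup_{t \ge 0} [t,\infty) \times \big(\bigcup_{s < t} R_s\big)$ and $R^+ := \bigcup_{t \ge 0} [t,\infty) \times \big(\bigcap_{s > t} R_s\big)$, and for $s \in \mathbb{R}$ the time-shifted set $R^{(s)} := \{(t-s,x) : (t,x) \in R,\ t - s \ge 0\}$. Then: (i) $R^-$ and $R^+$ are Root barriers; (ii) $R^- \subseteq R \subseteq R^+$; (iii) $R^- = \bigcup_{s < 0,\ s \in \mathbb{Q}} R^{(s)}$ and $R^+ = \bigcap_{s > 0,\ s \in \mathbb{Q}} R^{(s)}$. -/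
/-- A Root barrier: a subset of `[0,∞) × E` whose time sections are nondecreasing in time. -/
def IsRootBarrier {E : Type*} (R : Set (ℝ × E)) : Prop :=
  (∀ p ∈ R, 0 ≤ p.1) ∧ ∀ (t : ℝ) (x : E) (s : ℝ), (t, x) ∈ R → t < s → (s, x) ∈ R

theorem root_barrier_left_right_regularisations {E : Type*} (R : Set (ℝ × E))
    (hR : IsRootBarrier R)
    (Rminus Rplus : Set (ℝ × E)) (Rshift : ℝ → Set (ℝ × E))
    (hminus : Rminus = {p : ℝ × E | 0 ≤ p.1 ∧ ∃ t, 0 ≤ t ∧ t ≤ p.1 ∧ ∃ s, s < t ∧ (s, p.2) ∈ R})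
    (hplus : Rplus = {p : ℝ × E | 0 ≤ p.1 ∧ ∃ t, 0 ≤ t ∧ t ≤ p.1 ∧ ∀ s, t < s → (s, p.2) ∈ R})
    (hshift : ∀ s : ℝ, Rshift s = {p : ℝ × E | 0 ≤ p.1 ∧ (p.1 + s, p.2) ∈ R}) :
    (IsRootBarrier Rminus ∧ IsRootBarrier Rplus) ∧
    (Rminus ⊆ R ∧ R ⊆ Rplus) ∧
    (Rminus = ⋃ s : {q : ℚ // (q : ℝ) < 0}, Rshift (s : ℚ) ∧
      Rplus = ⋂ s : {q : ℚ // 0 < (q : ℝ)}, Rshift (s : ℚ)) := by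
  obtain ⟨h0, hmono⟩ := hR
  have hmm : ∀ p : ℝ × E, p ∈ R → ∀ s, p.1 < s → (s, p.2) ∈ R := by
    intro p hp s hs
    exact hmono p.1 p.2 s (by simpa using hp) hs
  refine ⟨⟨⟨?_, ?_⟩, ⟨?_, ?_⟩⟩, ⟨?_, ?_⟩, ?_, ?_⟩
  · intro p hp; rw [hminus] at hp; exact hp.1
  · intro t x s ht hts
    rw [hminus] at ht ⊢
    obtain ⟨h1, t', h2, h3, hrest⟩ := ht
    exact ⟨le_trans h1 hts.le, t', h2, le_trans h3 hts.le, hrest⟩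
  · intro p hp; rw [hplus] at hp; exact hp.1
  · intro t x s ht hts
    rw [hplus] at ht ⊢
    obtain ⟨h1, t', h2, h3, hrest⟩ := ht
    exact ⟨le_trans h1 hts.le, t', h2, le_trans h3 hts.le, hrest⟩
  · intro p hp
    rw [hminus] at hp
    obtain ⟨h1, t, h2, h3, s, h4, h5⟩ := hp
    have := hmono s p.2 p.1 h5 (lt_of_lt_of_le h4 h3)
    simpa using this
  · intro p hp
    rw [hplus]
    exact ⟨h0 p hp, p.1, h0 p hp, le_refl _, fun s hs => hmm p hp s hs⟩
  · ext p
    simp only [Set.mem_iUnion, hminus, hshift, Set.mem_setOf_eq]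
    constructor
    · rintro ⟨h1, t, h2, h3, s, h4, h5⟩
      have hlt : s - p.1 < 0 := by linarith
      obtain ⟨q, hq1, hq2⟩ := exists_rat_btwn hlt
      exact ⟨⟨q, hq2⟩, h1, hmono s p.2 (p.1 + q) h5 (by linarith)⟩
    · rintro ⟨⟨q, hq⟩, h1, h2⟩
      exact ⟨h1, p.1, h1, le_refl _, p.1 + q, by linarith, h2⟩
  · ext p
    simp only [Set.mem_iInter, hplus, hshift, Set.mem_setOf_eq]
    constructor
    · rintro ⟨h1, t, h2, h3, h4⟩ ⟨q, hq⟩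
      exact ⟨h1, h4 _ (by linarith)⟩
    · intro h
      have h1 : 0 ≤ p.1 := (h ⟨1, by norm_num⟩).1
      refine ⟨h1, p.1, h1, le_refl _, fun s hs => ?_⟩
      obtain ⟨q, hq1, hq2⟩ := exists_rat_btwn (show (0:ℝ) < s - p.1 by linarith)
      exact hmono (p.1 + q) p.2 s (h ⟨q, hq1⟩).2 (by linarith)
end

section
/- The function $\rho : \mathbb{R}^3 \to [0,\infty)$ defined by $\rho(x,y,a) = \frac{4}{\pi}\cdot \frac{x^2+y^2}{\sqrt{(x^2+y^2)^2 + 16a^2}}\,\mathbf{1}\{(x^2+y^2)^2 + 16a^2 < 1\}$ (with $\rho(0,0,a):=0$) is a probability density with respect to Lebesgue measure on $\mathbb{R}^3$: $\int_{\mathbb{R}^3} \rho(x,y,a)\,dx\,dy\,da = 1$. -/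
/-!
Integrate over the centre coordinate `a` last. For fixed `a ≠ 0` the density depends on `(x, y)`
only through `s = x² + y²`, and polar coordinates turn the planar integral into `π` times a
one-variable integral in `s`. On `{s² + 16a² < 1}` the integrand `s / √(s² + 16a²)` is the
derivative of `√(s² + 16a²)`, so the slice has mass `4 (1 - 4|a|)⁺`, a tent of area one.
-/

open MeasureTheory

/-- The density of the measure `ν` on the Heisenberg group with `δ₀ ≺ ν`. -/
noncomputable def heisDensity (p : ℝ × ℝ × ℝ) : ℝ :=
  if (p.1 ^ 2 + p.2.1 ^ 2) ^ 2 + 16 * p.2.2 ^ 2 < 1 then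
    (4 / Real.pi) * (p.1 ^ 2 + p.2.1 ^ 2) /
      Real.sqrt ((p.1 ^ 2 + p.2.1 ^ 2) ^ 2 + 16 * p.2.2 ^ 2)
  else 0

open Real Set

theorem integral_prod_prod_eq_integral_integral {α β γ E : Type*} [MeasurableSpace α]
    [MeasurableSpace β] [MeasurableSpace γ] [NormedAddCommGroup E] [NormedSpace ℝ E]
    {μ : Measure α} {ν : Measure β} {ρ : Measure γ} [SigmaFinite μ] [SigmaFinite ν]
    [SigmaFinite ρ] {f : α × β × γ → E} (hf : Integrable f (μ.prod (ν.prod ρ))) :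
    ∫ p, f p ∂μ.prod (ν.prod ρ) = ∫ c, ∫ v, f (v.1, v.2, c) ∂μ.prod ν ∂ρ := by
  have hassoc := measurePreserving_prodAssoc μ ν ρ
  rw [← hassoc.integral_comp',
    integral_prod_symm (fun x => f (MeasurableEquiv.prodAssoc x)) (hassoc.integrable_comp_emb
      MeasurableEquiv.prodAssoc.measurableEmbedding |>.2 hf)]
  rfl

theorem integral_comp_sq_add_sq {E : Type*} [NormedAddCommGroup E] [NormedSpace ℝ E]
    (g : ℝ → E) : ∫ v : ℝ × ℝ, g (v.1 ^ 2 + v.2 ^ 2) = π • ∫ s in Ioi 0, g s := by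
  have hpolar (p : ℝ × ℝ) : (polarCoord.symm p).1 ^ 2 + (polarCoord.symm p).2 ^ 2 = p.1 ^ 2 := by
    rw [polarCoord_symm_apply, mul_pow, mul_pow, ← mul_add, cos_sq_add_sin_sq, mul_one]
  have hsubst : ∫ r in Ioi 0, r • g (r ^ 2) = (1 / 2 : ℝ) • ∫ s in Ioi 0, g s := by
    rw [← integral_comp_rpow_Ioi_of_pos (g := g) (p := 2) two_pos, ← integral_smul]
    refine setIntegral_congr_fun measurableSet_Ioi fun r _ => ?_
    norm_num [smul_smul, ← mul_assoc]
  rw [← integral_comp_polarCoord_symm, polarCoord_target]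
  simp only [hpolar]
  rw [Measure.volume_eq_prod, ← Measure.prod_restrict, integral_fun_fst (fun r => r • g (r ^ 2)),
    hsubst, smul_smul, measureReal_restrict_apply_univ,
    Real.volume_real_Ioo_of_le (by linarith [pi_pos])]
  congr 1
  ring

theorem integral_div_sqrt_sq_add {c : ℝ} (hc : 0 < c) (R : ℝ) :
    ∫ s in 0..R, s / √(s ^ 2 + c) = √(R ^ 2 + c) - √c := by
  have hderiv : ∀ s ∈ uIcc 0 R, HasDerivAt (fun s => √(s ^ 2 + c)) (s / √(s ^ 2 + c)) s := by
    intro s _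
    have hpos : 0 < s ^ 2 + c := by positivity
    convert ((hasDerivAt_pow 2 s).add_const c).sqrt hpos.ne' using 1
    field_simp
    push_cast
    ring
  have hcont : Continuous fun s => s / √(s ^ 2 + c) :=
    continuous_id.div (by fun_prop) fun s => (Real.sqrt_pos.2 (by positivity)).ne'
  rw [intervalIntegral.integral_eq_sub_of_hasDerivAt hderiv (hcont.intervalIntegrable 0 R)]
  simp

theorem integral_max_one_sub_mul_abs {k : ℝ} (hk : 0 < k) :
    ∫ a : ℝ, max (1 - k * |a|) 0 = 1 / k := by
  have hsupport : ∀ x ∈ Ioi 0 \ Ioc 0 (1 / k), max (1 - k * x) 0 = 0 := fun x hx => by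
    have hx' : 1 / k < x := not_le.1 fun h => hx.2 ⟨hx.1, h⟩
    rw [div_lt_iff₀ hk] at hx'
    exact max_eq_right (by linarith)
  rw [integral_comp_abs (f := fun a => max (1 - k * a) 0),
    setIntegral_eq_of_subset_of_forall_sdiff_eq_zero measurableSet_Ioi Ioc_subset_Ioi_self
      hsupport,
    setIntegral_congr_fun measurableSet_Ioc (g := fun x => 1 - k * x) fun x hx => max_eq_left ?_,
    ← intervalIntegral.integral_of_le (by positivity)]
  · rw [intervalIntegral.integral_sub intervalIntegrable_const
      ((continuous_const_mul k).intervalIntegrable _ _), intervalIntegral.integral_const_mul,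
      integral_id, intervalIntegral.integral_const, smul_eq_mul]
    field_simp
    ring
  · have hx' := hx.2
    rw [le_div_iff₀ hk] at hx'
    linarith

noncomputable def heisRadialProfile (c s : ℝ) : ℝ :=
  if s ^ 2 + c < 1 then s / √(s ^ 2 + c) else 0

theorem integral_Ioi_heisRadialProfile {c : ℝ} (hc : 0 < c) :
    ∫ s in Ioi 0, heisRadialProfile c s = max (1 - √c) 0 := by
  rcases lt_or_ge c 1 with hc1 | hc1
  · set R := √(1 - c)
    have hR : 0 ≤ R := Real.sqrt_nonneg _
    have hregion : ∀ s ∈ Ioi (0 : ℝ), (s ^ 2 + c < 1 ↔ s ∈ Iio R) := fun s hs => by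
      rw [mem_Iio, Real.lt_sqrt (le_of_lt hs)]
      constructor <;> intro h <;> linarith
    have hindicator : ∫ s in Ioi 0, heisRadialProfile c s
        = ∫ s in Ioi 0, (Iio R).indicator (fun s => s / √(s ^ 2 + c)) s :=
      setIntegral_congr_fun measurableSet_Ioi fun s hs => by
        simp only [heisRadialProfile, indicator_apply, hregion s hs]
    rw [hindicator, setIntegral_indicator measurableSet_Iio, Ioi_inter_Iio,
      ← integral_Ioc_eq_integral_Ioo, ← intervalIntegral.integral_of_le hR,
      integral_div_sqrt_sq_add hc, Real.sq_sqrt (by linarith), sub_add_cancel, Real.sqrt_one,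
      max_eq_left (by linarith [Real.sqrt_le_one.mpr hc1.le])]
  · have hempty : ∀ s : ℝ, heisRadialProfile c s = 0 := fun s =>
      if_neg (by nlinarith [sq_nonneg s])
    simp only [hempty, integral_zero]
    rw [max_eq_right (by linarith [Real.one_le_sqrt.mpr hc1])]

theorem abs_heisRadialProfile_le_one {c s : ℝ} (hc : 0 ≤ c) (hs : 0 ≤ s) :
    |heisRadialProfile c s| ≤ 1 := by
  unfold heisRadialProfile
  split_ifs
  · rw [abs_of_nonneg (by positivity)]
    exact div_le_one_of_le₀ (Real.le_sqrt_of_sq_le (by linarith)) (Real.sqrt_nonneg _)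
  · simp

theorem heisDensity_eq_heisRadialProfile (x y a : ℝ) :
    heisDensity (x, y, a) = 4 / π * heisRadialProfile (16 * a ^ 2) (x ^ 2 + y ^ 2) := by
  simp only [heisDensity, heisRadialProfile]
  split_ifs <;> ring

theorem measurable_heisDensity : Measurable heisDensity :=
  Measurable.ite (measurableSet_lt (by fun_prop) measurable_const) (by fun_prop) measurable_const

theorem support_heisDensity_subset : Function.support heisDensity ⊆ Metric.closedBall 0 1 := by
  rintro ⟨x, y, a⟩ hp
  have hball : (x ^ 2 + y ^ 2) ^ 2 + 16 * a ^ 2 < 1 := by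
    by_contra h
    exact hp (if_neg h)
  have hdisk : x ^ 2 + y ^ 2 < 1 := by nlinarith [sq_nonneg a]
  simp only [mem_closedBall_zero_iff, Prod.norm_def, Real.norm_eq_abs, max_le_iff,
    ← sq_le_one_iff_abs_le_one]
  refine ⟨?_, ?_, ?_⟩ <;> nlinarith [sq_nonneg x, sq_nonneg y]

theorem integrable_heisDensity : Integrable heisDensity := by
  have hbound : ∀ p, ‖heisDensity p‖ ≤ 4 / π := fun ⟨x, y, a⟩ => by
    rw [heisDensity_eq_heisRadialProfile, norm_mul, Real.norm_of_nonneg (by positivity)]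
    exact mul_le_of_le_one_right (by positivity)
      (abs_heisRadialProfile_le_one (by positivity) (by positivity))
  exact (integrableOn_iff_integrable_of_support_subset support_heisDensity_subset).1 <|
    Measure.integrableOn_of_bounded measure_closedBall_lt_top.ne
      measurable_heisDensity.aestronglyMeasurable (ae_of_all _ hbound)

theorem integral_heisDensity_slice {a : ℝ} (ha : a ≠ 0) :
    ∫ v : ℝ × ℝ, heisDensity (v.1, v.2, a) = 4 * max (1 - 4 * |a|) 0 := by
  have hsqrt : √(16 * a ^ 2) = 4 * |a| := by
    rw [show (16 : ℝ) * a ^ 2 = (4 * a) ^ 2 by ring, Real.sqrt_sq_eq_abs, abs_mul,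
      abs_of_pos four_pos]
  simp only [heisDensity_eq_heisRadialProfile]
  rw [integral_const_mul, integral_comp_sq_add_sq (heisRadialProfile (16 * a ^ 2)),
    integral_Ioi_heisRadialProfile (by positivity), hsqrt, smul_eq_mul]
  field_simp

theorem heisDensity_integral_eq_one : ∫ p : ℝ × ℝ × ℝ, heisDensity p = 1 := by
  calc ∫ p, heisDensity p = ∫ a, ∫ v : ℝ × ℝ, heisDensity (v.1, v.2, a) :=
        integral_prod_prod_eq_integral_integral integrable_heisDensity
    _ = ∫ a, 4 * max (1 - 4 * |a|) 0 :=
        integral_congr_ae <| (Measure.ae_ne volume 0).mono fun _ => integral_heisDensity_slice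
    _ = 1 := by
        rw [integral_const_mul, integral_max_one_sub_mul_abs four_pos]
        norm_num
end
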